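/- arXiv:1003.0709 — 5 statements merged into one kernel-verified Lean document; each statement's English description precedes it below -/
import Mathlib

section
/- If the real part of the characteristic exponent ψ of a Lévy process satisfies: for all u ≥ v > 0, Re ψ(u) ≤ Re ψ(v) + C for some constant C ≥ 0, then for all real u, v one has Re ψ((u+v)/2) + Re ψ((u-v)/2) ≤ (Re ψ(u) + Re ψ(v))/8 + C/4. -/
/-!
Write `f = Re ψ`. The Lévy–Khintchine form makes `f` even and nonpositive, and
`cos (2θ) - 1 = 2 (cos θ - 1)² + 4 (cos θ - 1)` gives the doubling bound `4 f w ≤ f (2w)`.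
With near-monotonicity this yields `4 f w ≤ f u + C` whenever `|u| ≤ 2|w|`. Both `u` and `v`
have modulus at most `|s| + |d|` for `s = (u+v)/2`, `d = (u-v)/2`, so the one of `s`, `d` of larger
modulus satisfies this against `u` and against `v`, and the other contributes `f ≤ 0`.
-/

open MeasureTheory

section NearMonotone

variable {f : ℝ → ℝ} {C : ℝ}

lemma Function.Even.apply_abs (heven : Function.Even f) (x : ℝ) : f |x| = f x := by
  rcases abs_cases x with ⟨h, _⟩ | ⟨h, _⟩
  · rw [h]
  · rw [h, heven]

lemma four_mul_le_add_of_abs_le_two_mul_abs (heven : Function.Even f) (hzero : f 0 = 0)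
    (hnonpos : ∀ u, f u ≤ 0) (hdouble : ∀ u, 4 * f u ≤ f (2 * u))
    (hmono : ∀ u v, 0 < v → v ≤ u → f u ≤ f v + C)
    {w u : ℝ} (h : |u| ≤ 2 * |w|) : 4 * f w ≤ f u + C := by
  have hC : 0 ≤ C := by linarith [hmono 1 1 one_pos le_rfl]
  rcases (abs_nonneg u).eq_or_lt with hu | hu
  · rw [abs_eq_zero.mp hu.symm, hzero]
    linarith [hnonpos w]
  · calc 4 * f w = 4 * f |w| := by rw [heven.apply_abs]
      _ ≤ f (2 * |w|) := hdouble |w|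
      _ ≤ f |u| + C := hmono _ _ hu h
      _ = f u + C := by rw [heven.apply_abs]

lemma add_le_of_abs_le_two_mul_abs (heven : Function.Even f) (hzero : f 0 = 0)
    (hnonpos : ∀ u, f u ≤ 0) (hdouble : ∀ u, 4 * f u ≤ f (2 * u))
    (hmono : ∀ u v, 0 < v → v ≤ u → f u ≤ f v + C)
    {m n u v : ℝ} (hu : |u| ≤ 2 * |m|) (hv : |v| ≤ 2 * |m|) :
    f m + f n ≤ (f u + f v) / 8 + C / 4 := by
  linarith [four_mul_le_add_of_abs_le_two_mul_abs heven hzero hnonpos hdouble hmono hu,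
    four_mul_le_add_of_abs_le_two_mul_abs heven hzero hnonpos hdouble hmono hv, hnonpos n]

theorem midpoint_bound_of_nearMonotone (heven : Function.Even f) (hzero : f 0 = 0)
    (hnonpos : ∀ u, f u ≤ 0) (hdouble : ∀ u, 4 * f u ≤ f (2 * u))
    (hmono : ∀ u v, 0 < v → v ≤ u → f u ≤ f v + C)
    (u v : ℝ) : f ((u + v) / 2) + f ((u - v) / 2) ≤ (f u + f v) / 8 + C / 4 := by
  have hu : |u| ≤ |(u + v) / 2| + |(u - v) / 2| := by
    calc |u| = |(u + v) / 2 + (u - v) / 2| := by ring_nf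
      _ ≤ _ := abs_add_le _ _
  have hv : |v| ≤ |(u + v) / 2| + |(u - v) / 2| := by
    calc |v| = |(u + v) / 2 - (u - v) / 2| := by ring_nf
      _ ≤ _ := abs_sub _ _
  rcases le_total |(u + v) / 2| |(u - v) / 2| with hsd | hds
  · rw [add_comm]
    exact add_le_of_abs_le_two_mul_abs heven hzero hnonpos hdouble hmono
      (by linarith) (by linarith)
  · exact add_le_of_abs_le_two_mul_abs heven hzero hnonpos hdouble hmono
      (by linarith) (by linarith)

end NearMonotone

section LevyKhintchine

variable (a : ℝ) (ν : Measure ℝ)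

noncomputable def levyExponentRe (u : ℝ) : ℝ :=
  -a ^ 2 * u ^ 2 / 2 + ∫ x, (Real.cos (u * x) - 1) ∂ν

lemma levyExponentRe_even : Function.Even (levyExponentRe a ν) := by
  intro u
  simp only [levyExponentRe, neg_mul, Real.cos_neg, neg_sq]

lemma levyExponentRe_zero : levyExponentRe a ν 0 = 0 := by
  simp [levyExponentRe]

lemma levyExponentRe_nonpos (u : ℝ) : levyExponentRe a ν u ≤ 0 := by
  have hint : ∫ x, (Real.cos (u * x) - 1) ∂ν ≤ 0 :=
    integral_nonpos fun x => sub_nonpos.mpr (Real.cos_le_one _)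
  have hgauss : 0 ≤ a ^ 2 * u ^ 2 / 2 := by positivity
  simp only [levyExponentRe]
  linarith

lemma four_mul_levyExponentRe_le (hcos : ∀ u : ℝ, Integrable (fun x => Real.cos (u * x) - 1) ν)
    (u : ℝ) : 4 * levyExponentRe a ν u ≤ levyExponentRe a ν (2 * u) := by
  have hjump :
      4 * ∫ x, (Real.cos (u * x) - 1) ∂ν ≤ ∫ x, (Real.cos (2 * u * x) - 1) ∂ν := by
    rw [← integral_const_mul]
    refine integral_mono ((hcos u).const_mul 4) (hcos (2 * u)) fun x => ?_
    have hcos2 : Real.cos (2 * u * x) = 2 * Real.cos (u * x) ^ 2 - 1 := by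
      rw [mul_assoc, Real.cos_two_mul]
    simp only [hcos2]
    nlinarith [sq_nonneg (Real.cos (u * x) - 1)]
  simp only [levyExponentRe]
  linarith

end LevyKhintchine

theorem stmt1_general (a : ℝ) (ν : Measure ℝ)
    (hcos : ∀ u : ℝ, Integrable (fun x => Real.cos (u * x) - 1) ν)
    (ψRe : ℝ → ℝ)
    (hψ : ∀ u : ℝ, ψRe u = -a ^ 2 * u ^ 2 / 2 + ∫ x, (Real.cos (u * x) - 1) ∂ν)
    (C : ℝ)
    (hmono : ∀ u v : ℝ, 0 < v → v ≤ u → ψRe u ≤ ψRe v + C) :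
    ∀ u v : ℝ, ψRe ((u + v) / 2) + ψRe ((u - v) / 2) ≤ (ψRe u + ψRe v) / 8 + C / 4 := by
  obtain rfl : ψRe = levyExponentRe a ν := funext hψ
  exact midpoint_bound_of_nearMonotone (levyExponentRe_even a ν) (levyExponentRe_zero a ν)
    (levyExponentRe_nonpos a ν) (four_mul_levyExponentRe_le a ν hcos) hmono

/-- Near-monotonicity of `Re ψ` implies the mid-point bound
`Re ψ((u+v)/2) + Re ψ((u-v)/2) ≤ (Re ψ(u) + Re ψ(v))/8 + C/4`. -/
theorem stmt1 (a : ℝ) (ν : Measure ℝ) (hν0 : ν {0} = 0)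
    (hνint : Integrable (fun x => min (x ^ 2) 1) ν)
    (hcos : ∀ u : ℝ, Integrable (fun x => Real.cos (u * x) - 1) ν)
    (ψRe : ℝ → ℝ)
    (hψ : ∀ u : ℝ, ψRe u = -a ^ 2 * u ^ 2 / 2 + ∫ x, (Real.cos (u * x) - 1) ∂ν)
    (C : ℝ) (hC : 0 ≤ C)
    (hmono : ∀ u v : ℝ, 0 < v → v ≤ u → ψRe u ≤ ψRe v + C) :
    ∀ u v : ℝ, ψRe ((u + v) / 2) + ψRe ((u - v) / 2) ≤ (ψRe u + ψRe v) / 8 + C / 4 :=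
  stmt1_general a ν hcos ψRe hψ C hmono
end

section
/- Let the Lévy measure ν = ν₀ + ν₁, where ν₀ is a finite measure on ℝ and ν₁ has density k(x)/|x| with k right-continuous increasing on (-∞,0) and left-continuous decreasing on (0,∞). Then the characteristic exponent ψ of the Lévy process satisfies: for all u ≥ v > 0, Re ψ(u) ≤ Re ψ(v) + c, where c = 2ν₀(ℝ). -/
/-!
Only the finite part `ν₀` can make `Re ψ` fail to decrease: the Gaussian part `-a²u²/2` is
decreasing in `u > 0`, and `∫ (cos (u x) - 1) ∂ν₀` lies in `[-2 ν₀(ℝ), 0]`. For the part with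
density `k(x)/|x|`, the substitution `x = (v/u) y` turns the integral at `u` into
`∫ (cos (v y) - 1) k((v/u) y)/|y| dy`, the factor `v/u` of the Jacobian cancelling against
`1/|x|`; since `k` is unimodal at `0`, `k((v/u) y) ≥ k(y)`, and `cos (v y) - 1 ≤ 0`.
-/

open MeasureTheory

section WithDensity

variable {α : Type*} [MeasurableSpace α] {μ : Measure α} {d : α → ℝ}

theorem integrable_withDensity_ofReal_iff (hd : AEMeasurable d μ) (hd0 : ∀ x, 0 ≤ d x)
    {g : α → ℝ} :
    Integrable g (μ.withDensity fun x => ENNReal.ofReal (d x)) ↔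
      Integrable (fun x => g x * d x) μ := by
  rw [integrable_withDensity_iff_integrable_smul₀' hd.ennreal_ofReal
    (Filter.Eventually.of_forall fun _ => ENNReal.ofReal_lt_top)]
  simp only [ENNReal.toReal_ofReal (hd0 _), smul_eq_mul, mul_comm]

theorem integral_withDensity_ofReal (hd : AEMeasurable d μ) (hd0 : ∀ x, 0 ≤ d x) (g : α → ℝ) :
    ∫ x, g x ∂μ.withDensity (fun x => ENNReal.ofReal (d x)) = ∫ x, g x * d x ∂μ := by
  rw [integral_withDensity_eq_integral_toReal_smul₀ hd.ennreal_ofReal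
    (Filter.Eventually.of_forall fun _ => ENNReal.ofReal_lt_top)]
  simp only [ENNReal.toReal_ofReal (hd0 _), smul_eq_mul, mul_comm]

end WithDensity

section CosSubOne

variable {α : Type*} [MeasurableSpace α] (μ : Measure α) (f : α → ℝ)

theorem integral_cos_sub_one_nonpos : ∫ x, (Real.cos (f x) - 1) ∂μ ≤ 0 :=
  integral_nonpos fun _ => sub_nonpos.mpr (Real.cos_le_one _)

theorem neg_two_mul_measureReal_univ_le_integral_cos_sub_one [IsFiniteMeasure μ]
    (hf : Integrable (fun x => Real.cos (f x) - 1) μ) :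
    -(2 * μ.real Set.univ) ≤ ∫ x, (Real.cos (f x) - 1) ∂μ := by
  have hmono : ∫ _, (-2 : ℝ) ∂μ ≤ ∫ x, (Real.cos (f x) - 1) ∂μ :=
    integral_mono (integrable_const _) hf fun x => by
      linarith [Real.neg_one_le_cos (f x)]
  rw [integral_const, smul_eq_mul] at hmono
  linarith

end CosSubOne

section Unimodal

variable {k : ℝ → ℝ}

theorem le_apply_mul_of_monotoneOn_of_antitoneOn (hkmono : MonotoneOn k (Set.Iio 0))
    (hkanti : AntitoneOn k (Set.Ioi 0)) {c y : ℝ} (hc0 : 0 < c) (hc1 : c ≤ 1)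
    (hy : y ≠ 0) : k y ≤ k (c * y) := by
  rcases hy.lt_or_gt with hy | hy
  · exact hkmono hy (mul_neg_of_pos_of_neg hc0 hy) (by nlinarith)
  · exact hkanti (mul_pos hc0 hy) hy (by nlinarith)

theorem integral_cos_sub_one_mul_div_abs_antitone (hkmono : MonotoneOn k (Set.Iio 0))
    (hkanti : AntitoneOn k (Set.Ioi 0)) {u v : ℝ} (hv : 0 < v) (hvu : v ≤ u)
    (hu_int : Integrable (fun x => (Real.cos (u * x) - 1) * (k x / |x|)))
    (hv_int : Integrable (fun x => (Real.cos (v * x) - 1) * (k x / |x|))) :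
    ∫ x, (Real.cos (u * x) - 1) * (k x / |x|) ≤ ∫ x, (Real.cos (v * x) - 1) * (k x / |x|) := by
  set c := v / u
  have hc0 : 0 < c := div_pos hv (hv.trans_le hvu)
  have hc1 : c ≤ 1 := div_le_one_of_le₀ hvu (hv.le.trans hvu)
  have hsubst : ∀ y, c * ((Real.cos (u * (c * y)) - 1) * (k (c * y) / |c * y|)) =
      (Real.cos (v * y) - 1) * (k (c * y) / |y|) := fun y => by
    have hucv : u * (c * y) = v * y := by
      simp only [c, ← mul_assoc, mul_div_cancel₀ v (hv.trans_le hvu).ne']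
    rw [hucv, abs_mul, abs_of_pos hc0]
    rcases eq_or_ne y 0 with rfl | hy
    · simp
    · field_simp [abs_ne_zero.mpr hy]
  have hchange : ∫ x, (Real.cos (u * x) - 1) * (k x / |x|) =
      ∫ y, (Real.cos (v * y) - 1) * (k (c * y) / |y|) := by
    rw [← funext hsubst, integral_const_mul,
      Measure.integral_comp_mul_left (fun x => (Real.cos (u * x) - 1) * (k x / |x|)) c,
      smul_eq_mul, abs_of_pos (inv_pos.mpr hc0), mul_inv_cancel_left₀ hc0.ne']
  have hchange_int : Integrable fun y => (Real.cos (v * y) - 1) * (k (c * y) / |y|) := by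
    simpa only [hsubst] using (hu_int.comp_mul_left' hc0.ne').const_mul c
  rw [hchange]
  refine integral_mono hchange_int hv_int fun y => ?_
  rcases eq_or_ne y 0 with rfl | hy
  · simp
  · exact mul_le_mul_of_nonpos_left
      (div_le_div_of_nonneg_right (le_apply_mul_of_monotoneOn_of_antitoneOn hkmono hkanti hc0 hc1 hy)
        (abs_nonneg y))
      (sub_nonpos.mpr (Real.cos_le_one _))

end Unimodal

theorem stmt3_general (a : ℝ) (ν ν₀ : Measure ℝ) [IsFiniteMeasure ν₀]
    (k : ℝ → ℝ) (hkmeas : Measurable k) (hknn : ∀ x, 0 ≤ k x)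
    (hν : ν = ν₀ + volume.withDensity (fun x => ENNReal.ofReal (k x / |x|)))
    (hkmono : MonotoneOn k (Set.Iio 0)) (hkanti : AntitoneOn k (Set.Ioi 0))
    (hcos : ∀ u : ℝ, Integrable (fun x => Real.cos (u * x) - 1) ν)
    (ψRe : ℝ → ℝ)
    (hψ : ∀ u : ℝ, ψRe u = -a ^ 2 * u ^ 2 / 2 + ∫ x, (Real.cos (u * x) - 1) ∂ν) :
    ∀ u v : ℝ, 0 < v → v ≤ u → ψRe u ≤ ψRe v + 2 * (ν₀ Set.univ).toReal := by
  intro u v hv hvu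
  have hd : AEMeasurable (fun x => k x / |x|) := (hkmeas.div measurable_abs).aemeasurable
  have hd0 : ∀ x, 0 ≤ k x / |x| := fun x => div_nonneg (hknn x) (abs_nonneg x)
  have hsplit : ∀ w, Integrable (fun x => Real.cos (w * x) - 1) ν₀ ∧
      Integrable (fun x => (Real.cos (w * x) - 1) * (k x / |x|)) := fun w => by
    have h := hcos w
    rwa [hν, integrable_add_measure, integrable_withDensity_ofReal_iff hd hd0] at h
  have hψ' : ∀ w, ψRe w = -a ^ 2 * w ^ 2 / 2 + ∫ x, (Real.cos (w * x) - 1) ∂ν₀ +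
      ∫ x, (Real.cos (w * x) - 1) * (k x / |x|) := fun w => by
    have h := hcos w
    rw [hν, integrable_add_measure] at h
    rw [hψ, hν, integral_add_measure h.1 h.2, integral_withDensity_ofReal hd hd0, add_assoc]
  have hgauss : -a ^ 2 * u ^ 2 / 2 ≤ -a ^ 2 * v ^ 2 / 2 := by
    have : a ^ 2 * v ^ 2 ≤ a ^ 2 * u ^ 2 := by gcongr
    linarith
  rw [hψ' u, hψ' v, ← measureReal_def]
  linarith [integral_cos_sub_one_nonpos ν₀ (u * ·),
    neg_two_mul_measureReal_univ_le_integral_cos_sub_one ν₀ (v * ·) (hsplit v).1,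
    integral_cos_sub_one_mul_div_abs_antitone hkmono hkanti hv hvu (hsplit u).2 (hsplit v).2]

/-- Under assumption H1 (ν = ν₀ + ν₁ with ν₀ finite and ν₁ with density k(x)/|x|,
k right-continuous increasing on (-∞,0) and left-continuous decreasing on (0,∞)),
the characteristic exponent satisfies `Re ψ(u) ≤ Re ψ(v) + 2ν₀(ℝ)` for all `u ≥ v > 0`. -/
theorem stmt3 (a : ℝ) (ν ν₀ : Measure ℝ) [IsFiniteMeasure ν₀]
    (k : ℝ → ℝ) (hkmeas : Measurable k) (hknn : ∀ x, 0 ≤ k x)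
    (hν : ν = ν₀ + volume.withDensity (fun x => ENNReal.ofReal (k x / |x|)))
    (hkmono : MonotoneOn k (Set.Iio 0)) (hkanti : AntitoneOn k (Set.Ioi 0))
    (hkrc : ∀ x < (0:ℝ), ContinuousWithinAt k (Set.Ici x) x)
    (hklc : ∀ x > (0:ℝ), ContinuousWithinAt k (Set.Iic x) x)
    (hcos : ∀ u : ℝ, Integrable (fun x => Real.cos (u * x) - 1) ν)
    (ψRe : ℝ → ℝ)
    (hψ : ∀ u : ℝ, ψRe u = -a ^ 2 * u ^ 2 / 2 + ∫ x, (Real.cos (u * x) - 1) ∂ν) :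
    ∀ u v : ℝ, 0 < v → v ≤ u → ψRe u ≤ ψRe v + 2 * (ν₀ Set.univ).toReal :=
  stmt3_general a ν ν₀ k hkmeas hknn hν hkmono hkanti hcos ψRe hψ
end

section
/- Let ψ be the characteristic exponent of a Lévy process with triple (a², ν, γ), and let R ≤ R' be reals with ∫_{|x|>1}(e^{-Rx} + e^{-R'x}) ν(dx) < ∞. Then there exists C > 0 such that for all complex u, v with Im u, Im v, Im u + Im v all in [R, R']: |ψ(u+v) − ψ(u) − ψ(v)| ≤ C (1 + sqrt(|Re ψ(Re u)|)) (1 + sqrt(|Re ψ(Re v)|)). -/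
/-!
The defect `ψ(u+v) - ψ(u) - ψ(v)` equals `-a²uv + ∫ (e^{iux} - 1)(e^{ivx} - 1) ν(dx)`, because the
compensator `iux·1_{|x|≤1}` is additive in `u`. For real `t`,
`|Re ψ(t)| = a²t²/2 + ∫ (1 - cos tx) ν(dx)`, so `ρ(w) := |Re ψ(Re w)|` controls `|a|·|w|` (the
imaginary part of `w` being bounded on the strip) and, via
`|e^z - 1|² = (e^{Re z} - 1)² + 2e^{Re z}(1 - cos (Im z))`, also `∫_{|x|≤1} |e^{iwx} - 1|² ν(dx)`;
both are `O((1 + √ρ(w))²)`. Cauchy–Schwarz then bounds the small-jump part of the integral by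
`O((1 + √ρ(u))(1 + √ρ(v)))`, while for `|x| > 1` the integrand is at most
`3(e^{-Rx} + e^{-R'x}) + 1`, which is integrable by the exponential-moment hypothesis.
-/

open MeasureTheory Complex

lemma add_mul_le_sq_mul_sq {A B r : ℝ} (hA : 0 ≤ A) (hB : 0 ≤ B) (hr : 0 ≤ r) :
    A + B * r ≤ ((√A + √B) * (1 + √r)) ^ 2 := by
  nlinarith [Real.sq_sqrt hA, Real.sq_sqrt hB, Real.sq_sqrt hr, Real.sqrt_nonneg A,
    Real.sqrt_nonneg B, Real.sqrt_nonneg r, mul_nonneg (Real.sqrt_nonneg A) (Real.sqrt_nonneg B),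
    mul_nonneg (mul_nonneg (Real.sqrt_nonneg A) (Real.sqrt_nonneg B)) (Real.sqrt_nonneg r)]

lemma integral_mul_le_of_integral_sq_le {α : Type*} [MeasurableSpace α] {μ : Measure α}
    {f g : α → ℝ} {F G : ℝ} (hf0 : 0 ≤ f) (hg0 : 0 ≤ g) (hf : MemLp f 2 μ) (hg : MemLp g 2 μ)
    (hF0 : 0 ≤ F) (hG0 : 0 ≤ G) (hF : ∫ a, f a ^ 2 ∂μ ≤ F ^ 2) (hG : ∫ a, g a ^ 2 ∂μ ≤ G ^ 2) :
    ∫ a, f a * g a ∂μ ≤ F * G := by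
  have h := integral_mul_le_Lp_mul_Lq_of_nonneg Real.HolderConjugate.two_two
    (ae_of_all _ hf0) (ae_of_all _ hg0) (by simpa using hf) (by simpa using hg)
  simp only [Real.rpow_two, ← Real.sqrt_eq_rpow] at h
  exact h.trans (mul_le_mul ((Real.sqrt_le_left hF0).2 hF) ((Real.sqrt_le_left hG0).2 hG)
    (Real.sqrt_nonneg _) hF0)

lemma norm_cexp_sub_one_sub_self_le_sq_mul_exp (z : ℂ) :
    ‖cexp z - 1 - z‖ ≤ ‖z‖ ^ 2 * Real.exp ‖z‖ := by
  simpa [Finset.sum_range_succ, sub_sub] using norm_exp_sub_sum_le_norm_mul_exp z 2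

lemma abs_exp_sub_one_le_abs_mul_exp (r : ℝ) : |Real.exp r - 1| ≤ |r| * Real.exp |r| := by
  simpa [← ofReal_exp, ← ofReal_one, ← ofReal_sub, norm_real] using
    norm_exp_sub_sum_le_norm_mul_exp (r : ℂ) 1

lemma norm_cexp_sub_one_sq (z : ℂ) :
    ‖cexp z - 1‖ ^ 2 = (Real.exp z.re - 1) ^ 2 + 2 * Real.exp z.re * (1 - Real.cos z.im) := by
  rw [Complex.sq_norm, normSq_apply]
  simp only [sub_re, sub_im, exp_re, exp_im, one_re, one_im]
  linear_combination Real.exp z.re ^ 2 * Real.sin_sq_add_cos_sq z.im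

lemma norm_cexp_I_mul_mul (u : ℂ) (x : ℝ) : ‖cexp (I * u * x)‖ = Real.exp (-(u.im * x)) := by
  simp [norm_exp, mul_re, mul_im]

lemma norm_cexp_I_mul_mul_sub_one_le (u : ℂ) (x : ℝ) :
    ‖cexp (I * u * x) - 1‖ ≤ Real.exp (-(u.im * x)) + 1 := by
  simpa [norm_cexp_I_mul_mul] using norm_sub_le (cexp (I * u * x)) 1

noncomputable def levyIntegrand (u : ℂ) (x : ℝ) : ℂ :=
  cexp (I * u * x) - 1 - if |x| ≤ 1 then I * u * x else 0

noncomputable def levyExponent (a γ : ℝ) (ν : Measure ℝ) (u : ℂ) : ℂ :=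
  -(a : ℂ) ^ 2 * u ^ 2 / 2 + I * γ * u + ∫ x, levyIntegrand u x ∂ν

lemma measurableSet_abs_le_one : MeasurableSet {x : ℝ | |x| ≤ 1} :=
  measurableSet_le (by fun_prop) (by fun_prop)

lemma measurableSet_one_lt_abs : MeasurableSet {x : ℝ | 1 < |x|} :=
  measurableSet_lt (by fun_prop) (by fun_prop)

lemma compl_setOf_abs_le_one : {x : ℝ | |x| ≤ 1}ᶜ = {x : ℝ | 1 < |x|} := by
  ext x; simp

lemma levyIntegrand_of_abs_le {x : ℝ} (hx : |x| ≤ 1) (u : ℂ) :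
    levyIntegrand u x = cexp (I * u * x) - 1 - I * u * x := by
  simp [levyIntegrand, hx]

lemma levyIntegrand_of_one_lt_abs {x : ℝ} (hx : 1 < |x|) (u : ℂ) :
    levyIntegrand u x = cexp (I * u * x) - 1 := by
  simp [levyIntegrand, hx.not_ge]

lemma levyIntegrand_add_sub (u v : ℂ) (x : ℝ) :
    levyIntegrand (u + v) x - levyIntegrand u x - levyIntegrand v x =
      (cexp (I * u * x) - 1) * (cexp (I * v * x) - 1) := by
  simp only [levyIntegrand]
  rw [show I * (u + v) * x = I * u * x + I * v * x by ring, Complex.exp_add]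
  split_ifs <;> ring

lemma re_levyIntegrand_ofReal (t x : ℝ) : (levyIntegrand t x).re = Real.cos (t * x) - 1 := by
  have : I * t * x = ((t * x : ℝ) : ℂ) * I := by push_cast; ring
  rw [levyIntegrand, this, sub_re, sub_re, exp_ofReal_mul_I_re]
  split_ifs <;> simp

lemma measurable_levyIntegrand (u : ℂ) : Measurable (levyIntegrand u) :=
  (by fun_prop : Measurable fun x : ℝ => cexp (I * u * x) - 1).sub
    (Measurable.ite measurableSet_abs_le_one (by fun_prop) measurable_const)

lemma norm_levyIntegrand_le_of_abs_le {x : ℝ} (hx : |x| ≤ 1) (u : ℂ) :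
    ‖levyIntegrand u x‖ ≤ ‖u‖ ^ 2 * Real.exp ‖u‖ * x ^ 2 := by
  have hux : ‖I * u * x‖ ≤ ‖u‖ := by
    simpa using mul_le_of_le_one_right (norm_nonneg u) hx
  calc ‖levyIntegrand u x‖ ≤ ‖I * u * x‖ ^ 2 * Real.exp ‖I * u * x‖ := by
        rw [levyIntegrand_of_abs_le hx]; exact norm_cexp_sub_one_sub_self_le_sq_mul_exp _
    _ = ‖u‖ ^ 2 * x ^ 2 * Real.exp ‖I * u * x‖ := by simp [mul_pow]
    _ ≤ ‖u‖ ^ 2 * x ^ 2 * Real.exp ‖u‖ := by gcongr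
    _ = ‖u‖ ^ 2 * Real.exp ‖u‖ * x ^ 2 := by ring

section

variable {ν : Measure ℝ}

lemma integrableOn_sq_of_abs_le_one (hν : Integrable (fun x => min (x ^ 2) 1) ν) :
    IntegrableOn (fun x => x ^ 2) {x : ℝ | |x| ≤ 1} ν :=
  hν.integrableOn.congr_fun
    (fun x hx => min_eq_left <| by simpa [sq_le_one_iff_abs_le_one] using hx)
    measurableSet_abs_le_one

lemma integrableOn_one_of_one_lt_abs (hν : Integrable (fun x => min (x ^ 2) 1) ν) :
    IntegrableOn (fun _ => (1 : ℝ)) {x : ℝ | 1 < |x|} ν :=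
  hν.integrableOn.congr_fun
    (fun x hx => min_eq_right <| by simpa [one_le_sq_iff_one_le_abs] using hx.le)
    measurableSet_one_lt_abs

lemma integrable_levyIntegrand (hν : Integrable (fun x => min (x ^ 2) 1) ν) {u : ℂ}
    (hu : IntegrableOn (fun x => Real.exp (-(u.im * x))) {x : ℝ | 1 < |x|} ν) :
    Integrable (levyIntegrand u) ν := by
  rw [← integrableOn_univ, ← Set.union_compl_self {x : ℝ | |x| ≤ 1}, compl_setOf_abs_le_one]
  refine IntegrableOn.union ?_ ?_
  · refine ((integrableOn_sq_of_abs_le_one hν).const_mul (‖u‖ ^ 2 * Real.exp ‖u‖)).mono'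
      (measurable_levyIntegrand u).aestronglyMeasurable ?_
    exact ae_restrict_of_forall_mem measurableSet_abs_le_one
      fun x hx => norm_levyIntegrand_le_of_abs_le hx u
  · refine (hu.add (integrableOn_one_of_one_lt_abs hν)).mono'
      (measurable_levyIntegrand u).aestronglyMeasurable ?_
    refine ae_restrict_of_forall_mem measurableSet_one_lt_abs fun x hx => ?_
    rw [levyIntegrand_of_one_lt_abs hx]
    exact norm_cexp_I_mul_mul_sub_one_le u x

lemma integrable_levyIntegrand_ofReal (hν : Integrable (fun x => min (x ^ 2) 1) ν) (t : ℝ) :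
    Integrable (levyIntegrand t) ν :=
  integrable_levyIntegrand hν (by simpa using integrableOn_one_of_one_lt_abs hν)

lemma integrable_one_sub_cos_mul (hν : Integrable (fun x => min (x ^ 2) 1) ν) (t : ℝ) :
    Integrable (fun x => 1 - Real.cos (t * x)) ν := by
  refine (integrable_levyIntegrand_ofReal hν t).re.neg.congr (ae_of_all _ fun x => ?_)
  simp [re_levyIntegrand_ofReal]

lemma re_levyExponent_ofReal (hν : Integrable (fun x => min (x ^ 2) 1) ν) (a γ t : ℝ) :
    (levyExponent a γ ν t).re = -(a ^ 2 * t ^ 2 / 2 + ∫ x, (1 - Real.cos (t * x)) ∂ν) := by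
  have hint : (∫ x, levyIntegrand t x ∂ν).re = -∫ x, (1 - Real.cos (t * x)) ∂ν := by
    have := integral_re (integrable_levyIntegrand_ofReal hν t)
    simp only [RCLike.re_to_complex] at this
    simp [← this, ← integral_neg, re_levyIntegrand_ofReal]
  have hpoly : (-(a : ℂ) ^ 2 * t ^ 2 / 2 + I * γ * t).re = -(a ^ 2 * t ^ 2 / 2) := by
    simp [← ofReal_pow, neg_div]
  rw [levyExponent, add_re, hpoly, hint]
  ring

lemma abs_re_levyExponent_ofReal (hν : Integrable (fun x => min (x ^ 2) 1) ν) (a γ t : ℝ) :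
    |(levyExponent a γ ν t).re| = a ^ 2 * t ^ 2 / 2 + ∫ x, (1 - Real.cos (t * x)) ∂ν := by
  have : 0 ≤ ∫ x, (1 - Real.cos (t * x)) ∂ν :=
    integral_nonneg fun x => sub_nonneg.2 (Real.cos_le_one _)
  rw [re_levyExponent_ofReal hν, abs_neg, abs_of_nonneg (by positivity)]

lemma abs_mul_norm_le_of_abs_im_le (hν : Integrable (fun x => min (x ^ 2) 1) ν) (a γ : ℝ)
    {M : ℝ} {w : ℂ} (hw : |w.im| ≤ M) :
    |a| * ‖w‖ ≤ (√2 + |a| * M) * (1 + √|(levyExponent a γ ν w.re).re|) := by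
  set ρ := |(levyExponent a γ ν w.re).re|
  have hρ : (a * w.re) ^ 2 ≤ 2 * ρ := by
    have : 0 ≤ ∫ x, (1 - Real.cos (w.re * x)) ∂ν :=
      integral_nonneg fun x => sub_nonneg.2 (Real.cos_le_one _)
    rw [show ρ = _ from abs_re_levyExponent_ofReal hν a γ w.re]
    nlinarith
  have hre : |a| * |w.re| ≤ √2 * √ρ := by
    rw [← abs_mul, ← Real.sqrt_sq_eq_abs, ← Real.sqrt_mul zero_le_two]
    exact Real.sqrt_le_sqrt hρ
  have him : |a| * |w.im| ≤ |a| * M := mul_le_mul_of_nonneg_left hw (abs_nonneg a)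
  have hM : 0 ≤ M := (abs_nonneg _).trans hw
  calc |a| * ‖w‖ ≤ |a| * |w.re| + |a| * |w.im| := by
        rw [← mul_add]; exact mul_le_mul_of_nonneg_left (norm_le_abs_re_add_abs_im w) (abs_nonneg a)
    _ ≤ √2 * √ρ + |a| * M := add_le_add hre him
    _ ≤ (√2 + |a| * M) * (1 + √ρ) := by
        nlinarith [mul_nonneg (mul_nonneg (abs_nonneg a) hM) (Real.sqrt_nonneg ρ),
          Real.sqrt_nonneg 2]

lemma norm_cexp_I_mul_mul_sub_one_sq_le {M : ℝ} {w : ℂ} (hw : |w.im| ≤ M) {x : ℝ}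
    (hx : |x| ≤ 1) :
    ‖cexp (I * w * x) - 1‖ ^ 2 ≤
      (M * Real.exp M) ^ 2 * x ^ 2 + 2 * Real.exp M * (1 - Real.cos (w.re * x)) := by
  set r := -(w.im * x)
  have hM : 0 ≤ M := (abs_nonneg _).trans hw
  have hr : |r| ≤ M * |x| := by rw [abs_neg, abs_mul]; gcongr
  have hrM : |r| ≤ M := hr.trans (mul_le_of_le_one_right hM hx)
  have hexp : |Real.exp r - 1| ≤ M * Real.exp M * |x| :=
    calc |Real.exp r - 1| ≤ |r| * Real.exp |r| := abs_exp_sub_one_le_abs_mul_exp r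
      _ ≤ M * |x| * Real.exp M := by gcongr
      _ = M * Real.exp M * |x| := by ring
  have hcos : 0 ≤ 1 - Real.cos (w.re * x) := sub_nonneg.2 (Real.cos_le_one _)
  have hre : (I * w * x).re = r := by simp [r]
  have him : (I * w * x).im = w.re * x := by simp
  rw [norm_cexp_sub_one_sq, hre, him, ← sq_abs (Real.exp r - 1)]
  gcongr
  · calc |Real.exp r - 1| ^ 2 ≤ (M * Real.exp M * |x|) ^ 2 := by gcongr
      _ = (M * Real.exp M) ^ 2 * x ^ 2 := by rw [mul_pow, sq_abs]
  · exact (le_abs_self r).trans hrM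

lemma integrableOn_sq_add_one_sub_cos (hν : Integrable (fun x => min (x ^ 2) 1) ν)
    (A B t : ℝ) :
    IntegrableOn (fun x => A * x ^ 2 + B * (1 - Real.cos (t * x))) {x : ℝ | |x| ≤ 1} ν :=
  ((integrableOn_sq_of_abs_le_one hν).const_mul A).add
    ((integrable_one_sub_cos_mul hν t).integrableOn.const_mul B)

lemma integrableOn_norm_cexp_I_mul_mul_sub_one_sq (hν : Integrable (fun x => min (x ^ 2) 1) ν)
    {M : ℝ} {w : ℂ} (hw : |w.im| ≤ M) :
    IntegrableOn (fun x : ℝ => ‖cexp (I * w * x) - 1‖ ^ 2) {x : ℝ | |x| ≤ 1} ν := by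
  refine (integrableOn_sq_add_one_sub_cos hν ((M * Real.exp M) ^ 2) (2 * Real.exp M) w.re).mono'
    (by fun_prop) (ae_restrict_of_forall_mem measurableSet_abs_le_one fun x hx => ?_)
  rw [Real.norm_of_nonneg (sq_nonneg _)]
  exact norm_cexp_I_mul_mul_sub_one_sq_le hw hx

lemma setIntegral_norm_cexp_I_mul_mul_sub_one_sq_le (hν : Integrable (fun x => min (x ^ 2) 1) ν)
    (a γ : ℝ) {M : ℝ} {w : ℂ} (hw : |w.im| ≤ M) :
    ∫ x in {x : ℝ | |x| ≤ 1}, ‖cexp (I * w * x) - 1‖ ^ 2 ∂ν ≤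
      (M * Real.exp M) ^ 2 * ∫ x in {x : ℝ | |x| ≤ 1}, x ^ 2 ∂ν +
        2 * Real.exp M * |(levyExponent a γ ν w.re).re| := by
  have hcos := integrable_one_sub_cos_mul hν w.re
  have hcos0 : 0 ≤ᵐ[ν] fun x => 1 - Real.cos (w.re * x) :=
    ae_of_all _ fun x => sub_nonneg.2 (Real.cos_le_one _)
  calc ∫ x in {x : ℝ | |x| ≤ 1}, ‖cexp (I * w * x) - 1‖ ^ 2 ∂ν
      ≤ ∫ x in {x : ℝ | |x| ≤ 1},
          ((M * Real.exp M) ^ 2 * x ^ 2 + 2 * Real.exp M * (1 - Real.cos (w.re * x))) ∂ν :=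
        setIntegral_mono_on (integrableOn_norm_cexp_I_mul_mul_sub_one_sq hν hw)
          (integrableOn_sq_add_one_sub_cos hν _ _ _) measurableSet_abs_le_one
          fun x hx => norm_cexp_I_mul_mul_sub_one_sq_le hw hx
    _ = (M * Real.exp M) ^ 2 * ∫ x in {x : ℝ | |x| ≤ 1}, x ^ 2 ∂ν +
          2 * Real.exp M * ∫ x in {x : ℝ | |x| ≤ 1}, (1 - Real.cos (w.re * x)) ∂ν := by
        rw [integral_add ((integrableOn_sq_of_abs_le_one hν).const_mul _)
          (hcos.integrableOn.const_mul _), integral_const_mul, integral_const_mul]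
    _ ≤ (M * Real.exp M) ^ 2 * ∫ x in {x : ℝ | |x| ≤ 1}, x ^ 2 ∂ν +
          2 * Real.exp M * |(levyExponent a γ ν w.re).re| := by
        gcongr
        rw [abs_re_levyExponent_ofReal hν]
        exact (setIntegral_le_integral hcos hcos0).trans (le_add_of_nonneg_left (by positivity))

lemma exists_setIntegral_norm_mul_norm_le (hν : Integrable (fun x => min (x ^ 2) 1) ν)
    (a γ M : ℝ) :
    ∃ c, ∀ u v : ℂ, |u.im| ≤ M → |v.im| ≤ M →
      ∫ x in {x : ℝ | |x| ≤ 1}, ‖cexp (I * u * x) - 1‖ * ‖cexp (I * v * x) - 1‖ ∂ν ≤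
        c * (1 + √|(levyExponent a γ ν u.re).re|) *
          (c * (1 + √|(levyExponent a γ ν v.re).re|)) := by
  set c := √((M * Real.exp M) ^ 2 * ∫ x in {x : ℝ | |x| ≤ 1}, x ^ 2 ∂ν) + √(2 * Real.exp M)
  have hmem : ∀ {w : ℂ}, |w.im| ≤ M →
      MemLp (fun x : ℝ => ‖cexp (I * w * x) - 1‖) 2 (ν.restrict {x : ℝ | |x| ≤ 1}) := fun hw =>
    (memLp_two_iff_integrable_sq (by fun_prop)).2
      (integrableOn_norm_cexp_I_mul_mul_sub_one_sq hν hw)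
  have hsq : ∀ {w : ℂ}, |w.im| ≤ M →
      ∫ x in {x : ℝ | |x| ≤ 1}, ‖cexp (I * w * x) - 1‖ ^ 2 ∂ν ≤
        (c * (1 + √|(levyExponent a γ ν w.re).re|)) ^ 2 := fun hw =>
    (setIntegral_norm_cexp_I_mul_mul_sub_one_sq_le hν a γ hw).trans
      (add_mul_le_sq_mul_sq (by positivity) (by positivity) (abs_nonneg _))
  exact ⟨c, fun u v hu hv =>
    integral_mul_le_of_integral_sq_le (fun _ => norm_nonneg _) (fun _ => norm_nonneg _)
      (hmem hu) (hmem hv) (by positivity) (by positivity) (hsq hu) (hsq hv)⟩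

end

section

variable {ν : Measure ℝ} {u v : ℂ}

lemma levyExponent_add_sub (hu : Integrable (levyIntegrand u) ν)
    (hv : Integrable (levyIntegrand v) ν) (huv : Integrable (levyIntegrand (u + v)) ν) (a γ : ℝ) :
    levyExponent a γ ν (u + v) - levyExponent a γ ν u - levyExponent a γ ν v =
      -(a : ℂ) ^ 2 * u * v + ∫ x, (cexp (I * u * x) - 1) * (cexp (I * v * x) - 1) ∂ν := by
  have hsub : Integrable (fun x => levyIntegrand (u + v) x - levyIntegrand u x) ν := huv.sub hu
  simp_rw [← levyIntegrand_add_sub]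
  rw [integral_sub hsub hv, integral_sub huv hu]
  simp only [levyExponent]
  ring

lemma integrable_norm_mul_norm_of_integrable_levyIntegrand (hu : Integrable (levyIntegrand u) ν)
    (hv : Integrable (levyIntegrand v) ν) (huv : Integrable (levyIntegrand (u + v)) ν) :
    Integrable (fun x : ℝ => ‖cexp (I * u * x) - 1‖ * ‖cexp (I * v * x) - 1‖) ν := by
  refine ((huv.sub hu).sub hv).norm.congr (ae_of_all _ fun x => ?_)
  simp only [Pi.sub_apply, levyIntegrand_add_sub, norm_mul]

lemma norm_levyExponent_add_sub_le (hu : Integrable (levyIntegrand u) ν)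
    (hv : Integrable (levyIntegrand v) ν) (huv : Integrable (levyIntegrand (u + v)) ν) (a γ : ℝ) :
    ‖levyExponent a γ ν (u + v) - levyExponent a γ ν u - levyExponent a γ ν v‖ ≤
      |a| * ‖u‖ * (|a| * ‖v‖) +
        ((∫ x in {x : ℝ | |x| ≤ 1}, ‖cexp (I * u * x) - 1‖ * ‖cexp (I * v * x) - 1‖ ∂ν) +
          ∫ x in {x : ℝ | 1 < |x|}, ‖cexp (I * u * x) - 1‖ * ‖cexp (I * v * x) - 1‖ ∂ν) := by
  rw [levyExponent_add_sub hu hv huv, ← compl_setOf_abs_le_one,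
    integral_add_compl measurableSet_abs_le_one
      (integrable_norm_mul_norm_of_integrable_levyIntegrand hu hv huv)]
  refine (norm_add_le _ _).trans (add_le_add (le_of_eq ?_) ?_)
  · simp only [norm_mul, norm_neg, norm_pow, norm_real, Real.norm_eq_abs]
    ring
  · simpa only [norm_mul] using norm_integral_le_integral_norm
      (fun x : ℝ => (cexp (I * u * x) - 1) * (cexp (I * v * x) - 1)) (μ := ν)

end

section

variable {R R' : ℝ} {ν : Measure ℝ}

lemma exp_neg_mul_le_of_mem_Icc {b : ℝ} (hb : b ∈ Set.Icc R R') (x : ℝ) :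
    Real.exp (-(b * x)) ≤ Real.exp (-R * x) + Real.exp (-R' * x) := by
  rcases le_total 0 x with hx | hx
  · exact (Real.exp_le_exp.2 (by nlinarith [hb.1])).trans
      (le_add_of_nonneg_right (Real.exp_pos _).le)
  · exact (Real.exp_le_exp.2 (by nlinarith [hb.2])).trans
      (le_add_of_nonneg_left (Real.exp_pos _).le)

lemma integrable_levyIntegrand_of_mem_Icc (hν : Integrable (fun x => min (x ^ 2) 1) ν)
    (hνexp : IntegrableOn (fun x => Real.exp (-R * x) + Real.exp (-R' * x)) {x : ℝ | 1 < |x|} ν)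
    {u : ℂ} (hu : u.im ∈ Set.Icc R R') :
    Integrable (levyIntegrand u) ν :=
  integrable_levyIntegrand hν <| hνexp.mono' (by fun_prop) <| ae_of_all _ fun x => by
    rw [Real.norm_of_nonneg (Real.exp_pos _).le]
    exact exp_neg_mul_le_of_mem_Icc hu x

lemma norm_mul_norm_le_of_mem_Icc {u v : ℂ} (hu : u.im ∈ Set.Icc R R')
    (hv : v.im ∈ Set.Icc R R') (huv : u.im + v.im ∈ Set.Icc R R') (x : ℝ) :
    ‖cexp (I * u * x) - 1‖ * ‖cexp (I * v * x) - 1‖ ≤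
      3 * (Real.exp (-R * x) + Real.exp (-R' * x)) + 1 := by
  calc ‖cexp (I * u * x) - 1‖ * ‖cexp (I * v * x) - 1‖
      ≤ (Real.exp (-(u.im * x)) + 1) * (Real.exp (-(v.im * x)) + 1) :=
        mul_le_mul (norm_cexp_I_mul_mul_sub_one_le u x) (norm_cexp_I_mul_mul_sub_one_le v x)
          (norm_nonneg _) (by positivity)
    _ = Real.exp (-((u.im + v.im) * x)) + Real.exp (-(u.im * x)) + Real.exp (-(v.im * x)) + 1 := by
        rw [show -((u.im + v.im) * x) = -(u.im * x) + -(v.im * x) by ring, Real.exp_add]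
        ring
    _ ≤ 3 * (Real.exp (-R * x) + Real.exp (-R' * x)) + 1 := by
        linarith [exp_neg_mul_le_of_mem_Icc hu x, exp_neg_mul_le_of_mem_Icc hv x,
          exp_neg_mul_le_of_mem_Icc huv x]

lemma setIntegral_norm_mul_norm_le_of_mem_Icc (hν : Integrable (fun x => min (x ^ 2) 1) ν)
    (hνexp : IntegrableOn (fun x => Real.exp (-R * x) + Real.exp (-R' * x)) {x : ℝ | 1 < |x|} ν)
    {u v : ℂ} (hu : u.im ∈ Set.Icc R R') (hv : v.im ∈ Set.Icc R R')
    (huv : u.im + v.im ∈ Set.Icc R R') :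
    ∫ x in {x : ℝ | 1 < |x|}, ‖cexp (I * u * x) - 1‖ * ‖cexp (I * v * x) - 1‖ ∂ν ≤
      ∫ x in {x : ℝ | 1 < |x|}, (3 * (Real.exp (-R * x) + Real.exp (-R' * x)) + 1) ∂ν :=
  setIntegral_mono_on
    (integrable_norm_mul_norm_of_integrable_levyIntegrand
      (integrable_levyIntegrand_of_mem_Icc hν hνexp hu)
      (integrable_levyIntegrand_of_mem_Icc hν hνexp hv)
      (integrable_levyIntegrand_of_mem_Icc hν hνexp (u := u + v) (by rwa [add_im]))).integrableOn
    ((hνexp.const_mul 3).add (integrableOn_one_of_one_lt_abs hν))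
    measurableSet_one_lt_abs fun x _ => norm_mul_norm_le_of_mem_Icc hu hv huv x

theorem exists_norm_levyExponent_add_sub_le (hν : Integrable (fun x => min (x ^ 2) 1) ν)
    (hνexp : IntegrableOn (fun x => Real.exp (-R * x) + Real.exp (-R' * x)) {x : ℝ | 1 < |x|} ν)
    (a γ : ℝ) :
    ∃ C > 0, ∀ u v : ℂ, u.im ∈ Set.Icc R R' → v.im ∈ Set.Icc R R' →
      u.im + v.im ∈ Set.Icc R R' →
      ‖levyExponent a γ ν (u + v) - levyExponent a γ ν u - levyExponent a γ ν v‖ ≤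
        C * (1 + √|(levyExponent a γ ν u.re).re|) * (1 + √|(levyExponent a γ ν v.re).re|) := by
  set M := max |R| |R'|
  have hM : ∀ {w : ℂ}, w.im ∈ Set.Icc R R' → |w.im| ≤ M := fun hw => abs_le_max_abs_abs hw.1 hw.2
  obtain ⟨c₂, hhead⟩ := exists_setIntegral_norm_mul_norm_le hν a γ M
  set c₁ := √2 + |a| * M
  set c₃ := ∫ x in {x : ℝ | 1 < |x|}, (3 * (Real.exp (-R * x) + Real.exp (-R' * x)) + 1) ∂ν
  have hc₃ : 0 ≤ c₃ := integral_nonneg fun x => by positivity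
  refine ⟨c₁ ^ 2 + c₂ ^ 2 + c₃ + 1, by positivity, fun u v hu hv huv => ?_⟩
  set P : ℂ → ℝ := fun w => 1 + √|(levyExponent a γ ν w.re).re|
  have hP : ∀ w, 1 ≤ P w := fun w => le_add_of_nonneg_right (Real.sqrt_nonneg _)
  calc _ ≤ _ := norm_levyExponent_add_sub_le (integrable_levyIntegrand_of_mem_Icc hν hνexp hu)
          (integrable_levyIntegrand_of_mem_Icc hν hνexp hv)
          (integrable_levyIntegrand_of_mem_Icc hν hνexp (u := u + v) (by rwa [add_im])) a γ
    _ ≤ c₁ * P u * (c₁ * P v) + (c₂ * P u * (c₂ * P v) + c₃) :=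
        add_le_add (mul_le_mul (abs_mul_norm_le_of_abs_im_le hν a γ (hM hu))
            (abs_mul_norm_le_of_abs_im_le hν a γ (hM hv)) (by positivity) (by positivity))
          (add_le_add (hhead u v (hM hu) (hM hv))
            (setIntegral_norm_mul_norm_le_of_mem_Icc hν hνexp hu hv huv))
    _ ≤ (c₁ ^ 2 + c₂ ^ 2 + c₃ + 1) * P u * P v := by
        nlinarith [hP u, hP v, mul_le_mul (hP u) (hP v) zero_le_one (by linarith [hP u])]

end

theorem stmt9_general (a γ R R' : ℝ) (ν : Measure ℝ)
    (hνint : Integrable (fun x => min (x ^ 2) 1) ν)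
    (hνexp : Integrable (fun x => Real.exp (-R * x) + Real.exp (-R' * x))
      (ν.restrict {x : ℝ | 1 < |x|}))
    (ψ : ℂ → ℂ)
    (hψ : ∀ u : ℂ, u.im ∈ Set.Icc R R' → ψ u =
      -(a:ℂ) ^ 2 * u ^ 2 / 2 + Complex.I * γ * u +
        ∫ x : ℝ, (Complex.exp (Complex.I * u * x) - 1 -
          (if |x| ≤ 1 then Complex.I * u * x else 0)) ∂ν)
    (hψreal : ∀ t : ℝ, ψ t =
      -(a:ℂ) ^ 2 * (t:ℂ) ^ 2 / 2 + Complex.I * γ * t +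
        ∫ x : ℝ, (Complex.exp (Complex.I * t * x) - 1 -
          (if |x| ≤ 1 then Complex.I * t * x else 0)) ∂ν) :
    ∃ C > (0:ℝ), ∀ u v : ℂ, u.im ∈ Set.Icc R R' → v.im ∈ Set.Icc R R' →
      u.im + v.im ∈ Set.Icc R R' →
      ‖ψ (u + v) - ψ u - ψ v‖ ≤
        C * (1 + Real.sqrt |(ψ (u.re : ℂ)).re|) * (1 + Real.sqrt |(ψ (v.re : ℂ)).re|) := by
  have hψL : ∀ u : ℂ, u.im ∈ Set.Icc R R' → ψ u = levyExponent a γ ν u := hψ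
  have hψLreal : ∀ t : ℝ, ψ t = levyExponent a γ ν t := hψreal
  obtain ⟨C, hC, hbound⟩ := exists_norm_levyExponent_add_sub_le hνint hνexp a γ
  refine ⟨C, hC, fun u v hu hv huv => ?_⟩
  rw [hψL (u + v) (by rwa [add_im]), hψL u hu, hψL v hv, hψLreal, hψLreal]
  exact hbound u v hu hv huv

/-- Lemma A.4 of the paper: on the strip `Im u ∈ [R,R']`,
`|ψ(u+v) − ψ(u) − ψ(v)| ≤ C(1+√|Re ψ(Re u)|)(1+√|Re ψ(Re v)|)`. -/
theorem stmt9 (a γ R R' : ℝ) (hRR : R ≤ R') (ν : Measure ℝ) (hν0 : ν {0} = 0)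
    (hνint : Integrable (fun x => min (x ^ 2) 1) ν)
    (hνexp : Integrable (fun x => Real.exp (-R * x) + Real.exp (-R' * x))
      (ν.restrict {x : ℝ | 1 < |x|}))
    (ψ : ℂ → ℂ)
    (hψ : ∀ u : ℂ, u.im ∈ Set.Icc R R' → ψ u =
      -(a:ℂ) ^ 2 * u ^ 2 / 2 + Complex.I * γ * u +
        ∫ x : ℝ, (Complex.exp (Complex.I * u * x) - 1 -
          (if |x| ≤ 1 then Complex.I * u * x else 0)) ∂ν)
    (hψreal : ∀ t : ℝ, ψ t =
      -(a:ℂ) ^ 2 * (t:ℂ) ^ 2 / 2 + Complex.I * γ * t +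
        ∫ x : ℝ, (Complex.exp (Complex.I * t * x) - 1 -
          (if |x| ≤ 1 then Complex.I * t * x else 0)) ∂ν) :
    ∃ C > (0:ℝ), ∀ u v : ℂ, u.im ∈ Set.Icc R R' → v.im ∈ Set.Icc R R' →
      u.im + v.im ∈ Set.Icc R R' →
      ‖ψ (u + v) - ψ u - ψ v‖ ≤
        C * (1 + Real.sqrt |(ψ (u.re : ℂ)).re|) * (1 + Real.sqrt |(ψ (v.re : ℂ)).re|) :=
  stmt9_general a γ R R' ν hνint hνexp ψ hψ hψreal
end

section
/- Let g_h(t) := (η̄(t) − t)/h where η̄ is the next point of the equidistant grid with step h on [0,T], and let f : [0,T] → [0,∞) be integrable. Then lim_{h→0} ∫_0^T g_h(t) f(t) dt = (1/2) ∫_0^T f(t) dt, where the limit is taken along h = T/n, n → ∞. -/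
/-! With `h = T / n` the integrand is `φ (t / h) * f t` for `φ x = ⌈x⌉ - x`, a `1`-periodic
function of mean `1 / 2`; subtracting the mean reduces to a periodic `φ` of mean zero. For
continuous `g`, the integral of `φ (t / h)` over each grid cell `[i h, (i + 1) h]` vanishes, so
`∫ φ (t / h) g t` over the cell equals `∫ φ (t / h) (g t - g (i h))`, which is at most
`h · sup |φ|` times the oscillation of `g` on scale `h`; summing over the cells, uniform
continuity gives the limit `0`. Integrable `f` follow by `L¹`-density of continuous functions,
since `f ↦ ∫ φ (t / h) f t` has norm at most `sup |φ|` uniformly in `h`. -/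

open MeasureTheory intervalIntegral Filter Topology Set Function
open scoped Interval

lemma periodic_ceil_sub_self : Periodic (fun x : ℝ => (⌈x⌉ : ℝ) - x) 1 := by
  intro x; simp only [Int.ceil_add_one]; push_cast; ring

lemma abs_ceil_sub_self_le (x : ℝ) : |(⌈x⌉ : ℝ) - x| ≤ 1 := by
  rw [abs_le]
  constructor <;> linarith [Int.le_ceil x, Int.ceil_lt_add_one x]

lemma integral_ceil_sub_self_zero_one : ∫ x in (0:ℝ)..1, ((⌈x⌉ : ℝ) - x) = 1 / 2 := by
  have : ∀ x ∈ Ι (0:ℝ) 1, (⌈x⌉ : ℝ) - x = 1 - x := by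
    intro x hx
    rw [uIoc_of_le zero_le_one] at hx
    rw [(Int.ceil_eq_iff (z := 1)).2 (by push_cast; constructor <;> linarith [hx.1, hx.2])]
    push_cast; ring
  rw [integral_congr_ae (Eventually.of_forall this),
    integral_sub intervalIntegrable_const intervalIntegral.intervalIntegrable_id]
  norm_num

lemma Measurable.intervalIntegrable_of_abs_le {φ : ℝ → ℝ} {C : ℝ} (hφ : Measurable φ)
    (hC : ∀ x, |φ x| ≤ C) (a b : ℝ) : IntervalIntegrable φ volume a b :=
  (intervalIntegrable_iff).2 <| Measure.integrableOn_of_bounded measure_Ioc_lt_top.ne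
    hφ.aestronglyMeasurable (M := C) (Eventually.of_forall hC)

lemma Function.Periodic.intervalIntegral_comp_div_eq {φ : ℝ → ℝ} (hφ : Periodic φ 1) {h : ℝ}
    (hh : h ≠ 0) (a : ℝ) : ∫ t in a * h..(a + 1) * h, φ (t / h) = h * ∫ x in (0:ℝ)..1, φ x := by
  rw [integral_comp_div _ hh, mul_div_cancel_right₀ _ hh, mul_div_cancel_right₀ _ hh,
    hφ.intervalIntegral_add_eq a 0, zero_add, smul_eq_mul]

lemma abs_integral_mul_le_of_integral_eq_zero {φ g : ℝ → ℝ} {a b C ε : ℝ} (hab : a ≤ b)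
    (hφi : IntervalIntegrable φ volume a b) (hφ0 : ∫ t in a..b, φ t = 0)
    (hφC : ∀ t, |φ t| ≤ C) (hg : ContinuousOn g (Icc a b))
    (hosc : ∀ t ∈ Icc a b, |g t - g a| ≤ ε) :
    |∫ t in a..b, φ t * g t| ≤ C * ε * (b - a) := by
  have hφg : IntervalIntegrable (fun t => φ t * g t) volume a b :=
    hφi.mul_continuousOn (by rwa [uIcc_of_le hab])
  have hshift : ∫ t in a..b, φ t * g t = ∫ t in a..b, φ t * (g t - g a) := by
    simp_rw [mul_sub]
    rw [integral_sub hφg (hφi.mul_const _), intervalIntegral.integral_mul_const, hφ0, zero_mul,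
      sub_zero]
  rw [hshift, ← Real.norm_eq_abs, ← abs_of_nonneg (sub_nonneg.2 hab)]
  refine norm_integral_le_of_norm_le_const fun t ht => ?_
  rw [uIoc_of_le hab] at ht
  rw [Real.norm_eq_abs, abs_mul]
  exact mul_le_mul (hφC t) (hosc t (Ioc_subset_Icc_self ht)) (abs_nonneg _)
    ((abs_nonneg _).trans (hφC t))

lemma abs_integral_mul_le_of_cells {φ g : ℝ → ℝ} {h C ε : ℝ} {n : ℕ} (hh : 0 ≤ h)
    (hφi : ∀ i < n, IntervalIntegrable φ volume (i * h) ((i + 1) * h))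
    (hφ0 : ∀ i < n, ∫ t in i * h..(i + 1) * h, φ t = 0) (hφC : ∀ t, |φ t| ≤ C)
    (hg : ContinuousOn g (Icc 0 (n * h)))
    (hosc : ∀ i < n, ∀ t ∈ Icc (i * h) ((i + 1) * h), |g t - g (i * h)| ≤ ε) :
    |∫ t in 0..n * h, φ t * g t| ≤ C * ε * (n * h) := by
  have hcell : ∀ i < n, Icc ((i : ℝ) * h) ((i + 1) * h) ⊆ Icc 0 (n * h) := fun i hi =>
    Icc_subset_Icc (by positivity) (by gcongr; exact_mod_cast hi)
  have hcell_le : ∀ i : ℕ, (i : ℝ) * h ≤ (i + 1) * h := fun i => by gcongr; linarith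
  have hsum := sum_integral_adjacent_intervals (a := fun i : ℕ => (i : ℝ) * h)
    (f := fun t => φ t * g t) (μ := volume) (n := n) fun i hi => by
      push_cast
      exact (hφi i hi).mul_continuousOn
        (by rw [uIcc_of_le (hcell_le i)]; exact hg.mono (hcell i hi))
  push_cast at hsum
  rw [zero_mul] at hsum
  rw [← hsum]
  calc |∑ i ∈ Finset.range n, ∫ t in i * h..(i + 1) * h, φ t * g t|
      ≤ ∑ i ∈ Finset.range n, |∫ t in i * h..(i + 1) * h, φ t * g t| :=
        Finset.abs_sum_le_sum_abs _ _
    _ ≤ ∑ _i ∈ Finset.range n, C * ε * h := Finset.sum_le_sum fun i hi => by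
        have hi := Finset.mem_range.1 hi
        refine (abs_integral_mul_le_of_integral_eq_zero (hcell_le i) (hφi i hi) (hφ0 i hi) hφC
          (hg.mono (hcell i hi)) (hosc i hi)).trans_eq ?_
        ring
    _ = C * ε * (n * h) := by simp only [Finset.sum_const, Finset.card_range, nsmul_eq_mul]; ring

theorem tendsto_integral_comp_div_mul_of_continuousOn {φ g : ℝ → ℝ} {C T : ℝ}
    (hper : Periodic φ 1) (hmean : ∫ x in (0:ℝ)..1, φ x = 0) (hφm : Measurable φ)
    (hφC : ∀ x, |φ x| ≤ C) (hT : 0 < T) (hg : ContinuousOn g (Icc 0 T)) :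
    Tendsto (fun n : ℕ => ∫ t in 0..T, φ (t / (T / n)) * g t) atTop (𝓝 0) := by
  rw [Metric.tendsto_nhds]
  intro ε hε
  have hC : 0 ≤ C := (abs_nonneg _).trans (hφC 0)
  set η := ε / (C * T + 1)
  have hη : 0 < η := by positivity
  obtain ⟨δ, hδ, hgδ⟩ := Metric.uniformContinuousOn_iff.1
    (isCompact_Icc.uniformContinuousOn_of_continuous hg) η hη
  filter_upwards [(tendsto_const_div_atTop_nhds_zero_nat T).eventually (gt_mem_nhds hδ),
    eventually_ne_atTop 0] with n hnδ hn
  set h := T / n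
  have hh : 0 < h := by positivity
  have hnh : n * h = T := mul_div_cancel₀ _ (Nat.cast_ne_zero.2 hn)
  have hcell : ∀ i < n, Icc ((i : ℝ) * h) ((i + 1) * h) ⊆ Icc 0 T := fun i hi =>
    hnh ▸ Icc_subset_Icc (by positivity) (by gcongr; exact_mod_cast hi)
  have hosc : ∀ i < n, ∀ t ∈ Icc ((i : ℝ) * h) ((i + 1) * h), |g t - g (i * h)| ≤ η := by
    intro i hi t ht
    rw [← Real.dist_eq]
    refine (hgδ _ (hcell i hi ht) _ (hcell i hi ⟨le_rfl, by gcongr; linarith⟩) ?_).le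
    rw [Real.dist_eq, abs_of_nonneg (by linarith [ht.1])]
    linarith [ht.2]
  have hbound := abs_integral_mul_le_of_cells (φ := fun t => φ (t / h)) hh.le
    (fun _ _ => (hφm.comp (measurable_id.div_const h)).intervalIntegrable_of_abs_le
      (fun t => hφC (t / h)) _ _)
    (fun i _ => by rw [hper.intervalIntegral_comp_div_eq hh.ne', hmean, mul_zero])
    (fun t => hφC (t / h)) (hnh ▸ hg) hosc
  rw [hnh] at hbound
  rw [Real.dist_eq, sub_zero]
  calc _ ≤ C * η * T := hbound
    _ = ε * (C * T / (C * T + 1)) := by ring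
    _ < ε := mul_lt_of_lt_one_right hε ((div_lt_one (by positivity)).2 (by linarith))

theorem tendsto_integral_mul_of_forall_continuous {X ι : Type*} [TopologicalSpace X]
    [NormalSpace X] [R1Space X] [WeaklyLocallyCompactSpace X] [MeasurableSpace X] [BorelSpace X]
    {μ : Measure X} [μ.Regular] {l : Filter ι} {φ : ι → X → ℝ} {C : ℝ}
    (hφm : ∀ i, AEStronglyMeasurable (φ i) μ) (hφC : ∀ i x, |φ i x| ≤ C)
    (hcont : ∀ g : X → ℝ, Continuous g → Tendsto (fun i => ∫ x, φ i x * g x ∂μ) l (𝓝 0))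
    {f : X → ℝ} (hf : Integrable f μ) :
    Tendsto (fun i => ∫ x, φ i x * f x ∂μ) l (𝓝 0) := by
  rw [Metric.tendsto_nhds]
  intro ε hε
  set δ := ε / 2 / (|C| + 1)
  obtain ⟨g, -, hfg, hg, hgi⟩ :=
    hf.exists_hasCompactSupport_integral_sub_le (ε := δ) (by positivity)
  filter_upwards [Metric.tendsto_nhds.1 (hcont g hg) (ε / 2) (half_pos hε)] with i hi
  rw [Real.dist_eq, sub_zero] at hi ⊢
  have hφi : ∀ u, Integrable u μ → Integrable (fun x => φ i x * u x) μ := fun u hu =>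
    hu.bdd_mul (hφm i) (c := C) (Eventually.of_forall (hφC i))
  have hdiff : |∫ x, φ i x * f x ∂μ - ∫ x, φ i x * g x ∂μ| ≤ |C| * δ := by
    rw [← integral_sub (hφi f hf) (hφi g hgi), ← Real.norm_eq_abs]
    calc ‖∫ x, (φ i x * f x - φ i x * g x) ∂μ‖ ≤ ∫ x, ‖φ i x * (f x - g x)‖ ∂μ := by
          simp_rw [mul_sub]; exact norm_integral_le_integral_norm _
      _ ≤ ∫ x, |C| * ‖f x - g x‖ ∂μ :=
          integral_mono (hφi _ (hf.sub hgi)).norm ((hf.sub hgi).norm.const_mul _) fun x => by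
            rw [norm_mul]; gcongr; exact (hφC i x).trans (le_abs_self C)
      _ = |C| * ∫ x, ‖f x - g x‖ ∂μ := integral_const_mul _ _
      _ ≤ |C| * δ := by gcongr
  have hδ : |C| * δ < ε / 2 := by
    rw [show |C| * δ = ε / 2 * (|C| / (|C| + 1)) by simp only [δ]; ring]
    exact mul_lt_of_lt_one_right (half_pos hε) ((div_lt_one (by positivity)).2 (by linarith))
  linarith [abs_sub_abs_le_abs_sub (∫ x, φ i x * f x ∂μ) (∫ x, φ i x * g x ∂μ)]

theorem tendsto_integral_comp_div_mul {φ f : ℝ → ℝ} {C T : ℝ}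
    (hper : Periodic φ 1) (hφm : Measurable φ) (hφC : ∀ x, |φ x| ≤ C) (hT : 0 < T)
    (hf : IntegrableOn f (Ioc 0 T)) :
    Tendsto (fun n : ℕ => ∫ t in 0..T, φ (t / (T / n)) * f t) atTop
      (𝓝 ((∫ x in (0:ℝ)..1, φ x) * ∫ t in 0..T, f t)) := by
  set m := ∫ x in (0:ℝ)..1, φ x
  have hψm : ∀ h : ℝ, Measurable fun t => φ (t / h) - m := fun h =>
    (hφm.comp (measurable_id.div_const h)).sub_const m
  have hψC : ∀ x, |φ x - m| ≤ C + |m| := fun x => (abs_sub _ _).trans (by linarith [hφC x])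
  have hψ :
      Tendsto (fun n : ℕ => ∫ t in Ioc 0 T, (φ (t / (T / n)) - m) * f t) atTop (𝓝 0) := by
    have : (volume.restrict (Ioc 0 T)).Regular :=
      Measure.Regular.restrict_of_measure_ne_top measure_Ioc_lt_top.ne
    refine tendsto_integral_mul_of_forall_continuous (fun n => (hψm _).aestronglyMeasurable)
      (fun _ _ => hψC _) (fun g hg => ?_) hf
    have hmean : ∫ x in (0:ℝ)..1, (φ x - m) = 0 := by
      rw [integral_sub (hφm.intervalIntegrable_of_abs_le hφC 0 1) intervalIntegrable_const]
      simp [m]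
    simpa only [integral_of_le hT.le] using tendsto_integral_comp_div_mul_of_continuousOn
      (fun x => by simp only [hper x]) hmean (hφm.sub_const m) hψC hT hg.continuousOn
  have hsplit : ∀ n : ℕ, ∫ t in 0..T, φ (t / (T / n)) * f t
      = (∫ t in Ioc 0 T, (φ (t / (T / n)) - m) * f t) + m * ∫ t in 0..T, f t := by
    intro n
    rw [integral_of_le hT.le, integral_of_le hT.le, ← MeasureTheory.integral_const_mul,
      ← integral_add (hf.bdd_mul (hψm _).aestronglyMeasurable (Eventually.of_forall fun _ => hψC _))
        (hf.const_mul m)]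
    congr 1 with t
    ring
  simpa only [hsplit, zero_add] using hψ.add_const (m * ∫ t in 0..T, f t)

theorem stmt13_general (T : ℝ) (hT : 0 < T) (f : ℝ → ℝ)
    (hf : IntegrableOn f (Set.Icc 0 T)) :
    Filter.Tendsto (fun n : ℕ =>
      ∫ t in (0:ℝ)..T, ((T / (n:ℝ) * (⌈t / (T / (n:ℝ))⌉ : ℝ) - t) / (T / (n:ℝ))) * f t)
      Filter.atTop (nhds ((1 / 2) * ∫ t in (0:ℝ)..T, f t)) := by
  have hlim := tendsto_integral_comp_div_mul periodic_ceil_sub_self (by fun_prop)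
    abs_ceil_sub_self_le hT (hf.mono_set Ioc_subset_Icc_self)
  rw [integral_ceil_sub_self_zero_one] at hlim
  refine hlim.congr' ?_
  filter_upwards [eventually_ne_atTop 0] with n hn
  have hh : T / n ≠ 0 := by positivity
  congr 1 with t
  rw [sub_div, mul_div_cancel_left₀ _ hh]

/-- Riemann–Lebesgue-type lemma: with `g_h(t) = (η̄(t) − t)/h` for the equidistant grid
with step `h = T/n`, and `f ≥ 0` integrable on `[0,T]`,
`∫_0^T g_h(t) f(t) dt → (1/2)∫_0^T f(t) dt` as `n → ∞`. -/
theorem stmt13 (T : ℝ) (hT : 0 < T) (f : ℝ → ℝ)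
    (hf : IntegrableOn f (Set.Icc 0 T))
    (hfnn : ∀ t ∈ Set.Icc (0:ℝ) T, 0 ≤ f t) :
    Filter.Tendsto (fun n : ℕ =>
      ∫ t in (0:ℝ)..T, ((T / (n:ℝ) * (⌈t / (T / (n:ℝ))⌉ : ℝ) - t) / (T / (n:ℝ))) * f t)
      Filter.atTop (nhds ((1 / 2) * ∫ t in (0:ℝ)..T, f t)) :=
  stmt13_general T hT f hf
end

section
/- Let ψ be the characteristic exponent of a Lévy process with triple (a², ν, γ) and let β ∈ ℝ be such that ∫_{|x|>1} e^{|β||x|} ν(dx) < ∞. Then there exists c₃ < ∞ such that for all real α: ∫_{|x|≤1} |e^{i(α+iβ)x} − 1|² ν(dx) ≤ c₃ + 2 e^{|β|} |Re ψ(α)|. -/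
/-!
Writing `e^{i(α+iβ)x} = e^{-βx} e^{iαx}` gives
`|e^{i(α+iβ)x} − 1|² = (e^{-βx} − 1)² + 2e^{-βx}(1 − cos αx)`.
For `|x| ≤ 1` the first term is at most `β² e^{2|β|} x²`, whose integral over `[-1, 1]` is finite,
and the second at most `2e^{|β|}(1 − cos αx)`, whose `ν`-integral is
`−Re ψ(α) − a²α²/2 ≤ |Re ψ(α)|`.
-/

open MeasureTheory

namespace Real

lemma abs_exp_sub_one_le_abs_mul_exp_abs (t : ℝ) : |exp t - 1| ≤ |t| * exp |t| := by
  rcases le_total 0 t with ht | ht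
  · have h1 : 1 ≤ exp t := one_le_exp ht
    have h2 : exp (-t) * exp t = 1 := by rw [← exp_add, neg_add_cancel, exp_zero]
    rw [abs_of_nonneg ht, abs_of_nonneg (by linarith)]
    nlinarith [add_one_le_exp (-t)]
  · have h1 : exp t ≤ 1 := exp_le_one_iff.mpr ht
    rw [abs_of_nonpos ht, abs_of_nonpos (by linarith)]
    nlinarith [add_one_le_exp t, one_le_exp (neg_nonneg.mpr ht)]

lemma sq_exp_sub_one_le_exp_mul_sq {t r : ℝ} (h : |t| ≤ r) :
    (exp t - 1) ^ 2 ≤ exp (2 * r) * t ^ 2 :=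
  calc (exp t - 1) ^ 2 = |exp t - 1| ^ 2 := (sq_abs _).symm
    _ ≤ (|t| * exp r) ^ 2 := by
      gcongr
      exact (abs_exp_sub_one_le_abs_mul_exp_abs t).trans (by gcongr)
    _ = exp (2 * r) * t ^ 2 := by rw [mul_pow, sq_abs, ← exp_nat_mul]; push_cast; ring

end Real

lemma norm_cexp_I_mul_sub_one_sq (α β x : ℝ) :
    ‖Complex.exp (Complex.I * ((α : ℂ) + Complex.I * β) * x) - 1‖ ^ 2
      = (Real.exp (-(β * x)) - 1) ^ 2 + 2 * Real.exp (-(β * x)) * (1 - Real.cos (α * x)) := by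
  have h : Complex.I * ((α : ℂ) + Complex.I * β) * x = ↑(-(β * x)) + ↑(α * x) * Complex.I := by
    push_cast
    linear_combination (β * x : ℂ) * Complex.I_mul_I
  rw [h, Complex.exp_add, Complex.exp_mul_I, ← Complex.ofReal_exp, ← Complex.ofReal_cos,
    ← Complex.ofReal_sin, Complex.sq_norm, Complex.normSq_apply]
  simp only [Complex.add_re, Complex.add_im, Complex.mul_re, Complex.mul_im, Complex.sub_re,
    Complex.sub_im, Complex.one_re, Complex.one_im, Complex.I_re, Complex.I_im,
    Complex.ofReal_re, Complex.ofReal_im]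
  linear_combination Real.exp (-(β * x)) ^ 2 * Real.sin_sq_add_cos_sq (α * x)

lemma norm_cexp_I_mul_sub_one_sq_le {x : ℝ} (hx : |x| ≤ 1) (α β : ℝ) :
    ‖Complex.exp (Complex.I * ((α : ℂ) + Complex.I * β) * x) - 1‖ ^ 2
      ≤ Real.exp (2 * |β|) * β ^ 2 * x ^ 2 + 2 * Real.exp |β| * (1 - Real.cos (α * x)) := by
  have hβx : |-(β * x)| ≤ |β| := by
    rw [abs_neg, abs_mul]
    exact mul_le_of_le_one_right (abs_nonneg β) hx
  rw [norm_cexp_I_mul_sub_one_sq]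
  have h1 := Real.sq_exp_sub_one_le_exp_mul_sq hβx
  have h2 : Real.exp (-(β * x)) ≤ Real.exp |β| := Real.exp_le_exp.mpr ((le_abs_self _).trans hβx)
  have h3 : 0 ≤ 1 - Real.cos (α * x) := sub_nonneg.mpr (Real.cos_le_one _)
  nlinarith

lemma setIntegral_norm_cexp_I_mul_sub_one_sq_le {ν : Measure ℝ} {S : Set ℝ} {α : ℝ}
    (hS : MeasurableSet S) (hS1 : ∀ x ∈ S, |x| ≤ 1)
    (hsq : Integrable (fun x => x ^ 2) (ν.restrict S))
    (hcos : Integrable (fun x => 1 - Real.cos (α * x)) ν) (β : ℝ) :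
    ∫ x in S, ‖Complex.exp (Complex.I * ((α : ℂ) + Complex.I * β) * x) - 1‖ ^ 2 ∂ν
      ≤ Real.exp (2 * |β|) * β ^ 2 * (∫ x in S, x ^ 2 ∂ν)
        + 2 * Real.exp |β| * ∫ x, (1 - Real.cos (α * x)) ∂ν := by
  have hbound : Integrable (fun x => Real.exp (2 * |β|) * β ^ 2 * x ^ 2
      + 2 * Real.exp |β| * (1 - Real.cos (α * x))) (ν.restrict S) :=
    (hsq.const_mul _).add (hcos.restrict.const_mul _)
  have hle (x : ℝ) (hx : x ∈ S) := norm_cexp_I_mul_sub_one_sq_le (hS1 x hx) α β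
  have hint : Integrable (fun x : ℝ =>
      ‖Complex.exp (Complex.I * ((α : ℂ) + Complex.I * β) * x) - 1‖ ^ 2) (ν.restrict S) := by
    refine hbound.mono' (by fun_prop) ((ae_restrict_iff' hS).mpr (.of_forall fun x hx => ?_))
    rw [Real.norm_of_nonneg (by positivity)]
    exact hle x hx
  calc _ ≤ ∫ x in S, (Real.exp (2 * |β|) * β ^ 2 * x ^ 2
          + 2 * Real.exp |β| * (1 - Real.cos (α * x))) ∂ν := setIntegral_mono_on hint hbound hS hle
    _ = _ + 2 * Real.exp |β| * ∫ x in S, (1 - Real.cos (α * x)) ∂ν := by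
      rw [integral_add (hsq.const_mul _) (hcos.restrict.const_mul _), integral_const_mul,
        integral_const_mul]
    _ ≤ _ := by
      gcongr _ + _ * ?_
      exact setIntegral_le_integral hcos (.of_forall fun x => sub_nonneg.mpr (Real.cos_le_one _))

theorem stmt16_general (a β : ℝ) (ν : Measure ℝ)
    (hνint : Integrable (fun x => min (x ^ 2) 1) ν)
    (hcos : ∀ u : ℝ, Integrable (fun x => Real.cos (u * x) - 1) ν)
    (ψRe : ℝ → ℝ)
    (hψ : ∀ u : ℝ, ψRe u = -a ^ 2 * u ^ 2 / 2 + ∫ x, (Real.cos (u * x) - 1) ∂ν) :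
    ∃ c₃ : ℝ, ∀ α : ℝ,
      (∫ x in {x : ℝ | |x| ≤ 1},
        (‖Complex.exp (Complex.I * ((α : ℂ) + Complex.I * β) * x) - 1‖) ^ 2 ∂ν)
        ≤ c₃ + 2 * Real.exp |β| * |ψRe α| := by
  have hS : MeasurableSet {x : ℝ | |x| ≤ 1} := measurableSet_le (by fun_prop) (by fun_prop)
  have hsq : Integrable (fun x => x ^ 2) (ν.restrict {x : ℝ | |x| ≤ 1}) :=
    hνint.restrict.congr <| ae_restrict_of_forall_mem hS fun x (hx : |x| ≤ 1) =>
      min_eq_left (by rw [← sq_abs]; exact pow_le_one₀ (abs_nonneg x) hx)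
  refine ⟨Real.exp (2 * |β|) * β ^ 2 * ∫ x in {x : ℝ | |x| ≤ 1}, x ^ 2 ∂ν, fun α => ?_⟩
  have hcos' : Integrable (fun x => 1 - Real.cos (α * x)) ν := by
    simpa only [neg_sub] using (hcos α).fun_neg
  have hneg : ∫ x, (1 - Real.cos (α * x)) ∂ν = -∫ x, (Real.cos (α * x) - 1) ∂ν := by
    simp only [← integral_neg, neg_sub]
  have hre : ∫ x, (1 - Real.cos (α * x)) ∂ν ≤ |ψRe α| := by
    nlinarith [hψ α, neg_le_abs (ψRe α), sq_nonneg (a * α)]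
  refine (setIntegral_norm_cexp_I_mul_sub_one_sq_le hS (fun _ hx => hx) hsq hcos' β).trans ?_
  gcongr

/-- `∫_{|x|≤1} |e^{i(α+iβ)x} − 1|² ν(dx) ≤ c₃ + 2e^{|β|}|Re ψ(α)|`. -/
theorem stmt16 (a β : ℝ) (ν : Measure ℝ) (hν0 : ν {0} = 0)
    (hνint : Integrable (fun x => min (x ^ 2) 1) ν)
    (hcos : ∀ u : ℝ, Integrable (fun x => Real.cos (u * x) - 1) ν)
    (hexp : Integrable (fun x => Real.exp (|β| * |x|)) (ν.restrict {x : ℝ | 1 < |x|}))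
    (ψRe : ℝ → ℝ)
    (hψ : ∀ u : ℝ, ψRe u = -a ^ 2 * u ^ 2 / 2 + ∫ x, (Real.cos (u * x) - 1) ∂ν) :
    ∃ c₃ : ℝ, ∀ α : ℝ,
      (∫ x in {x : ℝ | |x| ≤ 1},
        (‖Complex.exp (Complex.I * ((α : ℂ) + Complex.I * β) * x) - 1‖) ^ 2 ∂ν)
        ≤ c₃ + 2 * Real.exp |β| * |ψRe α| :=
  stmt16_general a β ν hνint hcos ψRe hψ
end
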